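/- arXiv:1810.01341 — 2 statements merged into one kernel-verified Lean document; each statement's English description precedes it below -/
import Mathlib

section
/- Let a, b, c be positive integers with 4 | c, b odd, and gcd(a,c) = 1. Then the generalized quadratic Gauss sum G(a,b,c) := Σ_{n mod c} e^{2πi(an²+bn)/c} vanishes. -/
open Complex Finset

/-- The generalized quadratic Gauss sum `G(a,b,c) := Σ_{n=0}^{c-1} e^{2πi(an²+bn)/c}`. -/
noncomputable def gaussSum' (a b c : ℕ) : ℂ :=
  ∑ n ∈ Finset.range c,
    Complex.exp (2 * Real.pi * Complex.I * ((a : ℂ) * n ^ 2 + (b : ℂ) * n) / (c : ℂ))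

/-!
Shifting `n` by `c / 2` changes the phase `(an² + bn)/c` by `an + ac/4 + b/2`, which is an integer
plus one half when `4 ∣ c` and `b` is odd. So the summand is antiperiodic with antiperiod `c / 2`,
and the two halves of the sum cancel.
-/

theorem Function.Antiperiodic.sum_range_two_mul_eq_zero {M : Type*} [AddCommGroup M] {f : ℕ → M}
    {m : ℕ} (hf : Function.Antiperiodic f m) : ∑ n ∈ range (2 * m), f n = 0 := by
  rw [two_mul, sum_range_add]
  simp_rw [add_comm m, hf _, sum_neg_distrib, add_neg_cancel]

theorem Complex.exp_two_pi_mul_I_add_nat_add_half (z : ℂ) (N : ℕ) :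
    exp (2 * Real.pi * I * (z + N + 1 / 2)) = -exp (2 * Real.pi * I * z) := by
  have hsplit : 2 * Real.pi * I * (z + N + 1 / 2) = 2 * Real.pi * I * z + N * (2 * Real.pi * I)
      + Real.pi * I := by ring
  rw [hsplit, exp_add, exp_add, exp_nat_mul_two_pi_mul_I, exp_pi_mul_I, mul_one, mul_neg_one]

theorem antiperiodic_exp_quadratic_phase (a : ℕ) {b k : ℕ} (hb : Odd b) (hk : k ≠ 0) :
    Function.Antiperiodic
      (fun n : ℕ => exp (2 * Real.pi * I * ((a : ℂ) * n ^ 2 + (b : ℂ) * n) / ((4 * k : ℕ) : ℂ)))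
      (2 * k) := by
  intro n
  obtain ⟨j, rfl⟩ := hb
  have hk' : (k : ℂ) ≠ 0 := by exact_mod_cast hk
  have hphase : 2 * Real.pi * I * ((a : ℂ) * ((n + 2 * k : ℕ) : ℂ) ^ 2
        + ((2 * j + 1 : ℕ) : ℂ) * ((n + 2 * k : ℕ) : ℂ)) / ((4 * k : ℕ) : ℂ)
      = 2 * Real.pi * I * (((a : ℂ) * n ^ 2 + ((2 * j + 1 : ℕ) : ℂ) * n) / ((4 * k : ℕ) : ℂ)
        + ((a * n + a * k + j : ℕ) : ℂ) + 1 / 2) := by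
    push_cast
    field_simp
    ring
  simp only [hphase, exp_two_pi_mul_I_add_nat_add_half, mul_div_assoc]

theorem gaussSum_eq_zero_of_four_dvd_of_odd_general (a b c : ℕ) (hc : 0 < c)
    (h4 : 4 ∣ c) (hbodd : Odd b) :
    gaussSum' a b c = 0 := by
  obtain ⟨k, rfl⟩ := h4
  rw [gaussSum', congrArg range (show 4 * k = 2 * (2 * k) by ring)]
  exact (antiperiodic_exp_quadratic_phase a hbodd (by omega)).sum_range_two_mul_eq_zero

theorem gaussSum_eq_zero_of_four_dvd_of_odd (a b c : ℕ) (ha : 0 < a) (hb : 0 < b) (hc : 0 < c)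
    (h4 : 4 ∣ c) (hbodd : Odd b) (hgcd : Nat.gcd a c = 1) :
    gaussSum' a b c = 0 :=
  gaussSum_eq_zero_of_four_dvd_of_odd_general a b c hc h4 hbodd
end

section
/- Let m > 0, a₂ ≥ 0, a₁ > 0 be real numbers and let f₂(v) := (√D·a₂/a₁)·n₂² ∫_v^∞ (e^{-π(a₂n₂)²ω₁/a₁}/√ω₁) ∫_{ω₁}^∞ (e^{-πDn₂²ω₂/a₁}/√ω₂) dω₂ dω₁ where D = 4a₁a₃ - a₂² > 0 and n₂ ≠ 0 real. Then f₂'(v) = -(a₂|n₂|/√(a₁vπ)) e^{-π(a₂n₂)²v/a₁} Γ(1/2, m²πvn₂²), where m = √(4a₃ - a₂²/a₁). -/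
/-!
Put `k = π (a₂ n₂)² / a₁`, `c = π D n₂² / a₁` and `K = √D a₂ n₂² / a₁`. The function is
`K ∫_v^∞ g` with `g ω = e^{-k ω} / √ω · T(ω)` and `T(ω) = ∫_ω^∞ e^{-c t} / √t dt`, so its
derivative is `-K g(v)`. Since `T(ω) ≤ e^{-c ω} / (c √ω)`, `g` decays exponentially even when
`k = 0`, which makes the fundamental theorem of calculus applicable on `(v, ∞)`. The substitution
`t ↦ c t` turns `T(v)` into `Γ(1/2, c v) / √c`, and the constants collapse to `a₂ |n₂| / √(a₁ v π)`.
-/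

open MeasureTheory Real

/-- The upper incomplete gamma function `Γ(a,x) = ∫ₓ^∞ e^{-t} t^{a-1} dt`. -/
noncomputable def upperIncGamma (a x : ℝ) : ℝ :=
  ∫ t in Set.Ioi x, Real.exp (-t) * t ^ (a - 1)

open Set Filter

theorem hasDerivAt_integral_Ioi {E : Type*} [NormedAddCommGroup E] [NormedSpace ℝ E]
    [CompleteSpace E] {f : ℝ → E} {a v : ℝ} (hav : a < v) (hf : IntegrableOn f (Ioi a))
    (hfv : ContinuousAt f v) :
    HasDerivAt (fun x => ∫ t in Ioi x, f t) (-f v) v := by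
  have hint : IntervalIntegrable f volume a v :=
    (intervalIntegrable_iff_integrableOn_Ioc_of_le hav.le).2 (hf.mono_set Ioc_subset_Ioi_self)
  have hmeas : StronglyMeasurableAtFilter f (nhds v) :=
    ⟨Ioi a, Ioi_mem_nhds hav, hf.aestronglyMeasurable⟩
  refine ((intervalIntegral.integral_hasDerivAt_right hint hmeas hfv).const_sub
    (∫ t in Ioi a, f t)).congr_of_eventuallyEq ?_
  filter_upwards [Ioi_mem_nhds hav] with x hx
  rw [← intervalIntegral.integral_Ioi_sub_Ioi hf (le_of_lt hx), sub_sub_cancel]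

section ExpDivSqrt

variable {c : ℝ}

theorem exp_neg_mul_div_sqrt_eq (hc : 0 < c) {t : ℝ} (ht : 0 < t) :
    exp (-c * t) / √t = √c * (exp (-(c * t)) * (c * t) ^ ((1 / 2 : ℝ) - 1)) := by
  have hct : 0 < c * t := mul_pos hc ht
  rw [show (1 / 2 : ℝ) - 1 = -(1 / 2) by norm_num, rpow_neg hct.le, ← sqrt_eq_rpow,
    sqrt_mul hc.le, neg_mul]
  have := sqrt_pos.2 hc
  field_simp

theorem integrableOn_exp_neg_mul_div_sqrt (hc : 0 < c) :
    IntegrableOn (fun t => exp (-c * t) / √t) (Ioi 0) := by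
  have hΓ : IntegrableOn (fun t => exp (-(c * t)) * (c * t) ^ ((1 / 2 : ℝ) - 1)) (Ioi 0) := by
    rw [integrableOn_Ioi_comp_mul_left_iff (fun x => exp (-x) * x ^ ((1 / 2 : ℝ) - 1)) 0 hc,
      mul_zero]
    exact GammaIntegral_convergent one_half_pos
  exact IntegrableOn.congr_fun (hΓ.const_mul √c) (fun t ht => (exp_neg_mul_div_sqrt_eq hc ht).symm)
    measurableSet_Ioi

theorem integral_Ioi_exp_neg_mul_div_sqrt (hc : 0 < c) {x : ℝ} (hx : 0 ≤ x) :
    ∫ t in Ioi x, exp (-c * t) / √t = upperIncGamma (1 / 2) (c * x) / √c := by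
  rw [setIntegral_congr_fun measurableSet_Ioi
      (fun t ht => exp_neg_mul_div_sqrt_eq hc (hx.trans_lt ht)), integral_const_mul,
    integral_comp_mul_left_Ioi (fun t => exp (-t) * t ^ ((1 / 2 : ℝ) - 1)) x hc, smul_eq_mul,
    upperIncGamma]
  have := sqrt_pos.2 hc
  field_simp
  rw [sq_sqrt hc.le]

theorem integral_Ioi_exp_neg_mul_div_sqrt_le (hc : 0 < c) {x : ℝ} (hx : 0 < x) :
    ∫ t in Ioi x, exp (-c * t) / √t ≤ exp (-c * x) / (c * √x) := by
  have hbound : ∀ t ∈ Ioi x, exp (-c * t) / √t ≤ exp (-c * t) / √x := fun t ht => by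
    gcongr
    exact le_of_lt ht
  calc ∫ t in Ioi x, exp (-c * t) / √t
      ≤ ∫ t in Ioi x, exp (-c * t) / √x :=
        setIntegral_mono_on ((integrableOn_exp_neg_mul_div_sqrt hc).mono_set (Ioi_subset_Ioi hx.le))
          ((exp_neg_integrableOn_Ioi x hc).div_const _) measurableSet_Ioi hbound
    _ = exp (-c * x) / (c * √x) := by
        rw [integral_div, integral_exp_mul_Ioi (neg_lt_zero.2 hc)]
        field_simp

theorem hasDerivAt_integral_Ioi_exp_neg_mul_div_sqrt (hc : 0 < c) {x : ℝ} (hx : 0 < x) :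
    HasDerivAt (fun y => ∫ t in Ioi y, exp (-c * t) / √t) (-(exp (-c * x) / √x)) x :=
  hasDerivAt_integral_Ioi hx (integrableOn_exp_neg_mul_div_sqrt hc)
    (ContinuousAt.div (by fun_prop) continuous_sqrt.continuousAt (sqrt_pos.2 hx).ne')

end ExpDivSqrt

section DoubleIntegral

variable {k c : ℝ}

theorem continuousOn_exp_neg_mul_div_sqrt_mul_tail (hc : 0 < c) :
    ContinuousOn (fun ω => exp (-k * ω) / √ω * ∫ t in Ioi ω, exp (-c * t) / √t) (Ioi 0) :=
  fun ω hω => ContinuousAt.continuousWithinAt <|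
    (ContinuousAt.div (by fun_prop) continuous_sqrt.continuousAt (sqrt_pos.2 hω).ne').mul
      (hasDerivAt_integral_Ioi_exp_neg_mul_div_sqrt hc hω).continuousAt

theorem integrableOn_exp_neg_mul_div_sqrt_mul_tail (hk : 0 ≤ k) (hc : 0 < c) {s : ℝ}
    (hs : 0 < s) :
    IntegrableOn (fun ω => exp (-k * ω) / √ω * ∫ t in Ioi ω, exp (-c * t) / √t) (Ioi s) := by
  refine Integrable.mono' ((exp_neg_integrableOn_Ioi s hc).const_mul (c * s)⁻¹)
    (((continuousOn_exp_neg_mul_div_sqrt_mul_tail hc).mono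
      (Ioi_subset_Ioi hs.le)).aestronglyMeasurable measurableSet_Ioi) ?_
  filter_upwards [ae_restrict_mem measurableSet_Ioi] with ω (hω : s < ω)
  have hω₀ : 0 < ω := hs.trans hω
  have hT₀ : 0 ≤ ∫ t in Ioi ω, exp (-c * t) / √t :=
    setIntegral_nonneg measurableSet_Ioi fun t _ => by positivity
  have hexp : exp (-k * ω) ≤ 1 := exp_le_one_iff.2 (by nlinarith)
  rw [norm_of_nonneg (by positivity)]
  calc exp (-k * ω) / √ω * ∫ t in Ioi ω, exp (-c * t) / √t
      ≤ 1 / √ω * (exp (-c * ω) / (c * √ω)) := by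
        gcongr
        exact integral_Ioi_exp_neg_mul_div_sqrt_le hc hω₀
    _ = (c * ω)⁻¹ * exp (-c * ω) := by
        have := sqrt_pos.2 hω₀
        field_simp
        rw [sq_sqrt hω₀.le]
    _ ≤ (c * s)⁻¹ * exp (-c * ω) := by gcongr

theorem hasDerivAt_integral_Ioi_exp_neg_mul_div_sqrt_mul_tail (hk : 0 ≤ k) (hc : 0 < c) {v : ℝ}
    (hv : 0 < v) :
    HasDerivAt (fun x => ∫ ω in Ioi x, exp (-k * ω) / √ω * ∫ t in Ioi ω, exp (-c * t) / √t)
      (-(exp (-k * v) / √v * (upperIncGamma (1 / 2) (c * v) / √c))) v := by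
  rw [← integral_Ioi_exp_neg_mul_div_sqrt hc hv.le]
  exact hasDerivAt_integral_Ioi (half_lt_self hv)
    (integrableOn_exp_neg_mul_div_sqrt_mul_tail hk hc (half_pos hv))
    ((continuousOn_exp_neg_mul_div_sqrt_mul_tail hc).continuousAt (Ioi_mem_nhds hv))

end DoubleIntegral

theorem deriv_f2_general (a₁ a₂ a₃ n₂ : ℝ) (ha₁ : 0 < a₁)
    (hD : 0 < 4 * a₁ * a₃ - a₂ ^ 2) (hn₂ : n₂ ≠ 0) (v : ℝ) (hv : 0 < v) :
    HasDerivAt (fun v : ℝ =>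
        (Real.sqrt (4 * a₁ * a₃ - a₂ ^ 2) * a₂ / a₁) * n₂ ^ 2 *
          ∫ ω₁ in Set.Ioi v,
            (Real.exp (-Real.pi * (a₂ * n₂) ^ 2 * ω₁ / a₁) / Real.sqrt ω₁) *
              ∫ ω₂ in Set.Ioi ω₁,
                Real.exp (-Real.pi * (4 * a₁ * a₃ - a₂ ^ 2) * n₂ ^ 2 * ω₂ / a₁) / Real.sqrt ω₂)
      (-(a₂ * |n₂| / Real.sqrt (a₁ * v * Real.pi)) *
          Real.exp (-Real.pi * (a₂ * n₂) ^ 2 * v / a₁) *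
          upperIncGamma (1/2) (Real.sqrt (4 * a₃ - a₂ ^ 2 / a₁) ^ 2 * Real.pi * v * n₂ ^ 2))
      v := by
  set D := 4 * a₁ * a₃ - a₂ ^ 2
  set k := π * (a₂ * n₂) ^ 2 / a₁
  set c := π * D * n₂ ^ 2 / a₁
  have hc : 0 < c := by positivity
  have hexp_k (ω : ℝ) : -π * (a₂ * n₂) ^ 2 * ω / a₁ = -k * ω := by ring
  have hexp_c (ω : ℝ) : -π * D * n₂ ^ 2 * ω / a₁ = -c * ω := by ring
  have hm : √(4 * a₃ - a₂ ^ 2 / a₁) ^ 2 * π * v * n₂ ^ 2 = c * v := by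
    rw [sq_sqrt (by rw [sub_nonneg, div_le_iff₀ ha₁]; linarith)]
    simp only [c, D]
    field_simp
  have hsqrt_c : √c = √D * |n₂| * √π / √a₁ := by
    rw [sqrt_div' _ ha₁.le, sqrt_mul' _ (sq_nonneg _), sqrt_mul pi_pos.le, sqrt_sq_eq_abs]
    ring
  simp only [hexp_k, hexp_c, hm]
  refine ((hasDerivAt_integral_Ioi_exp_neg_mul_div_sqrt_mul_tail (by positivity) hc hv).const_mul
    (√D * a₂ / a₁ * n₂ ^ 2)).congr_deriv ?_
  rw [hsqrt_c, sqrt_mul (by positivity), sqrt_mul ha₁.le, ← sq_abs n₂]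
  have := sqrt_pos.2 ha₁
  have := abs_pos.2 hn₂
  field_simp
  rw [sq_sqrt ha₁.le]
  ring

theorem deriv_f2 (a₁ a₂ a₃ n₂ : ℝ) (ha₁ : 0 < a₁) (ha₂ : 0 ≤ a₂) (ha₃ : 0 < a₃)
    (hD : 0 < 4 * a₁ * a₃ - a₂ ^ 2) (hn₂ : n₂ ≠ 0) (v : ℝ) (hv : 0 < v) :
    HasDerivAt (fun v : ℝ =>
        (Real.sqrt (4 * a₁ * a₃ - a₂ ^ 2) * a₂ / a₁) * n₂ ^ 2 *
          ∫ ω₁ in Set.Ioi v,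
            (Real.exp (-Real.pi * (a₂ * n₂) ^ 2 * ω₁ / a₁) / Real.sqrt ω₁) *
              ∫ ω₂ in Set.Ioi ω₁,
                Real.exp (-Real.pi * (4 * a₁ * a₃ - a₂ ^ 2) * n₂ ^ 2 * ω₂ / a₁) / Real.sqrt ω₂)
      (-(a₂ * |n₂| / Real.sqrt (a₁ * v * Real.pi)) *
          Real.exp (-Real.pi * (a₂ * n₂) ^ 2 * v / a₁) *
          upperIncGamma (1/2) (Real.sqrt (4 * a₃ - a₂ ^ 2 / a₁) ^ 2 * Real.pi * v * n₂ ^ 2))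
      v :=
  deriv_f2_general a₁ a₂ a₃ n₂ ha₁ hD hn₂ v hv
end
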